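/- arXiv:2105.14012 — 4 statements merged into one kernel-verified Lean document; each statement's English description precedes it below -/
import Mathlib

section
/- Let p be prime, a an integer of multiplicative order f modulo p, e = (p-1)/f, g a primitive root mod p, ζ = e^{2πi/p}, and η_i = Σ_{j=1}^{f} ζ^{g^i a^j}. Then Σ_{i=1}^{e} |η_i|² = p - f. -/
/-! For `1 ≤ i ≤ e` the period `η i` is the sum of `ψ x = ζ ^ x` over the coset `g ^ i ⟨a⟩` of
`⟨a⟩` in `(ZMod p)ˣ`, and these cosets partition the nonzero residues. Expanding
`‖η i‖ ^ 2 = ∑_{x, y ∈ g ^ i ⟨a⟩} ψ (x - y)` and writing `x = y a ^ j` turns the total into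
`∑_{j < f} ∑_{y ≠ 0} ψ (y (a ^ j - 1))`. By orthogonality of `ψ` the inner sum is `p - 1` for
`j = 0` and `-1` otherwise, which gives `(p - 1) - (f - 1) = p - f`. -/

open Finset

theorem sum_range_pow_mul_pow {M β : Type*} [Monoid M] [AddCommMonoid β] {A : M} {f : ℕ}
    (hA : A ^ f = 1) (F : M → β) (r : ℕ) :
    ∑ j ∈ range f, F (A ^ j * A ^ r) = ∑ j ∈ range f, F (A ^ j) := by
  induction r generalizing F with
  | zero => simp
  | succ r ih =>
    calc ∑ j ∈ range f, F (A ^ j * A ^ (r + 1))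
        = ∑ j ∈ range f, F (A ^ j * A ^ r * A) := by simp only [pow_succ, mul_assoc]
      _ = ∑ j ∈ range f, F (A ^ (j + 1)) := by simpa [pow_succ] using ih fun x => F (x * A)
      _ = ∑ j ∈ range f, F (A ^ j) := by
          cases f with
          | zero => rfl
          | succ n => rw [sum_range_succ, sum_range_succ', hA, pow_zero]

theorem sum_Icc_one_pow_eq_sum_range {M β : Type*} [Monoid M] [AddCommMonoid β] {A : M} {f : ℕ}
    (hA : A ^ f = 1) (F : M → β) :
    ∑ j ∈ Icc 1 f, F (A ^ j) = ∑ j ∈ range f, F (A ^ j) := by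
  rw [← Finset.Ico_add_one_right_eq_Icc, sum_Ico_eq_sum_range]
  simpa [add_comm 1, pow_succ] using sum_range_pow_mul_pow hA F 1

theorem Nat.eq_of_intCast_dvd_sub_of_mem_Icc {n i j : ℕ} (hi : i ∈ Icc 1 n) (hj : j ∈ Icc 1 n)
    (h : (n : ℤ) ∣ (i : ℤ) - j) : i = j := by
  simp only [mem_Icc] at hi hj
  have := Int.eq_zero_of_abs_lt_dvd h (by rw [abs_lt]; omega)
  omega

theorem injOn_pow_mul_pow {G : Type*} [CommGroup G] {g a : G} {e f : ℕ}
    (hg : orderOf g = e * f) (ha : orderOf a = f) :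
    Set.InjOn (fun ij : ℕ × ℕ => g ^ ij.1 * a ^ ij.2) (Icc 1 e ×ˢ Icc 1 f : Finset (ℕ × ℕ)) := by
  rintro ⟨i, j⟩ hij ⟨i', j'⟩ hij' h
  simp only [coe_product, Set.mem_prod, mem_coe] at hij hij' h
  have hgi : g ^ ((i : ℤ) - i') = a ^ ((j' : ℤ) - j) := by
    simp only [zpow_sub, zpow_natCast, ← div_eq_mul_inv, div_eq_div_iff_mul_eq_mul, h, mul_comm]
  have hi : i = i' := by
    refine Nat.eq_of_intCast_dvd_sub_of_mem_Icc hij.1 hij'.1 ?_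
    rcases Nat.eq_zero_or_pos f with hf | hf
    · simp [hf] at hij
    rw [← mul_dvd_mul_iff_right (c := (f : ℤ)) (by omega)]
    rw [← Nat.cast_mul, ← hg, orderOf_dvd_iff_zpow_eq_one, zpow_mul, hgi, ← zpow_mul, mul_comm,
      zpow_mul, zpow_natCast, ← ha, pow_orderOf_eq_one, one_zpow]
  subst hi
  have hj : j = j' := by
    refine Nat.eq_of_intCast_dvd_sub_of_mem_Icc hij.2 hij'.2 ?_
    rw [← ha, orderOf_dvd_iff_zpow_eq_one, zpow_sub, zpow_natCast, zpow_natCast,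
      mul_inv_eq_one]
    exact mul_left_cancel h
  rw [hj]

theorem AddChar.sum_erase_zero_mulShift {R : Type*} [CommRing R] [Fintype R] [DecidableEq R]
    {ψ : AddChar R ℂ} (hψ : ψ.IsPrimitive) (c : R) :
    ∑ x ∈ univ.erase 0, ψ (x * c) = (if c = 0 then (Fintype.card R : ℂ) else 0) - 1 := by
  rw [sum_erase_eq_sub (mem_univ _), AddChar.sum_mulShift c hψ, zero_mul, AddChar.map_zero_eq_one,
    Nat.cast_ite, Nat.cast_zero]

theorem AddChar.norm_sum_sq {G ι : Type*} [AddCommGroup G] [Finite G] (ψ : AddChar G ℂ)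
    (s : Finset ι) (x : ι → G) :
    ((‖∑ j ∈ s, ψ (x j)‖ ^ 2 : ℝ) : ℂ) = ∑ j ∈ s, ∑ k ∈ s, ψ (x j - x k) := by
  push_cast
  rw [← Complex.mul_conj', map_sum, sum_mul_sum]
  simp only [← AddChar.map_neg_eq_conj, ← AddChar.map_add_eq_mul, sub_eq_add_neg]

section FiniteField

variable {F : Type*} [Field F] [Fintype F]

theorem sum_pow_mul_pow_eq_sum_erase_zero {β : Type*} [AddCommMonoid β] [DecidableEq F]
    {g a : F} {e f : ℕ} (hg : orderOf g = Fintype.card F - 1) (ha : orderOf a = f)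
    (hef : e * f = Fintype.card F - 1) (φ : F → β) :
    ∑ ij ∈ Icc 1 e ×ˢ Icc 1 f, φ (g ^ ij.1 * a ^ ij.2) = ∑ x ∈ univ.erase 0, φ x := by
  have hq : 1 < Fintype.card F := Fintype.one_lt_card
  have hne : ∀ {x : F}, 0 < orderOf x → x ≠ 0 := fun hx h0 => by
    simp [h0] at hx
  have hg0 : g ≠ 0 := hne (by omega)
  have ha0 : a ≠ 0 := hne (by rw [ha]; exact Nat.pos_of_mul_pos_left (by omega : 0 < e * f))
  have hinj : Set.InjOn (fun ij : ℕ × ℕ => g ^ ij.1 * a ^ ij.2)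
      (Icc 1 e ×ˢ Icc 1 f : Finset (ℕ × ℕ)) := by
    have := injOn_pow_mul_pow (g := Units.mk0 g hg0) (a := Units.mk0 a ha0) (e := e) (f := f)
      (by rw [← orderOf_units]; simpa [hef]) (by rw [← orderOf_units]; simpa)
    exact Units.val_injective.comp_injOn this |>.congr fun ij _ => by simp
  have himage : (Icc 1 e ×ˢ Icc 1 f).image (fun ij : ℕ × ℕ => g ^ ij.1 * a ^ ij.2) =
      univ.erase 0 := by
    refine eq_of_subset_of_card_le (fun x hx => ?_) ?_
    · obtain ⟨ij, -, rfl⟩ := mem_image.mp hx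
      exact mem_erase.mpr ⟨mul_ne_zero (pow_ne_zero _ hg0) (pow_ne_zero _ ha0), mem_univ _⟩
    · rw [card_image_of_injOn hinj, card_erase_of_mem (mem_univ _), card_univ, card_product,
        Nat.card_Icc, Nat.card_Icc, Nat.add_sub_cancel, Nat.add_sub_cancel, hef]
  rw [← himage, sum_image hinj]

theorem sum_norm_sq_gaussianPeriods {ψ : AddChar F ℂ} (hψ : ψ.IsPrimitive) {g a : F} {e f : ℕ}
    (hg : orderOf g = Fintype.card F - 1) (ha : orderOf a = f)
    (hef : e * f = Fintype.card F - 1) :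
    ∑ i ∈ Icc 1 e, ‖∑ j ∈ Icc 1 f, ψ (g ^ i * a ^ j)‖ ^ 2 = (Fintype.card F : ℝ) - f := by
  classical
  have haf : a ^ f = 1 := ha ▸ pow_orderOf_eq_one a
  have hf : 0 < f := Nat.pos_of_mul_pos_left (hef ▸ Nat.sub_pos_of_lt Fintype.one_lt_card)
  have hshift : ∀ x : F, ∀ k, ∑ j ∈ Icc 1 f, ψ (x * a ^ j - x * a ^ k) =
      ∑ j ∈ range f, ψ (x * a ^ k * (a ^ j - 1)) := fun x k => by
    rw [sum_Icc_one_pow_eq_sum_range haf (fun y => ψ (x * y - x * a ^ k)),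
      ← sum_range_pow_mul_pow haf (fun y => ψ (x * y - x * a ^ k)) k]
    exact sum_congr rfl fun j _ => congrArg ψ (by ring)
  have hsum_pow : ∑ j ∈ range f, (if a ^ j - 1 = 0 then (Fintype.card F : ℂ) else 0) =
      Fintype.card F := by
    rw [sum_eq_single_of_mem 0 (mem_range.mpr hf)]
    · simp
    · intro j hj hj0
      rw [if_neg (sub_ne_zero.mpr (pow_ne_one_of_lt_orderOf hj0 (ha ▸ mem_range.mp hj)))]
  apply Complex.ofReal_injective
  rw [Complex.ofReal_sum]
  simp only [AddChar.norm_sum_sq]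
  push_cast
  calc ∑ i ∈ Icc 1 e, ∑ j ∈ Icc 1 f, ∑ k ∈ Icc 1 f, ψ (g ^ i * a ^ j - g ^ i * a ^ k)
      = ∑ ik ∈ Icc 1 e ×ˢ Icc 1 f, ∑ j ∈ range f, ψ (g ^ ik.1 * a ^ ik.2 * (a ^ j - 1)) := by
        rw [sum_product]
        refine sum_congr rfl fun i _ => ?_
        rw [sum_comm]
        exact sum_congr rfl fun k _ => hshift _ k
    _ = ∑ j ∈ range f, ∑ x ∈ univ.erase 0, ψ (x * (a ^ j - 1)) := by
        rw [sum_comm]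
        exact sum_congr rfl fun j _ =>
          sum_pow_mul_pow_eq_sum_erase_zero hg ha hef fun x => ψ (x * (a ^ j - 1))
    _ = ∑ j ∈ range f, ((if a ^ j - 1 = 0 then (Fintype.card F : ℂ) else 0) - 1) := by
        simp only [AddChar.sum_erase_zero_mulShift hψ]
    _ = Fintype.card F - f := by
        rw [sum_sub_distrib, hsum_pow]
        simp

end FiniteField

theorem stmt6 (p : ℕ) (hp : p.Prime) (a : ℕ) (hpa : ¬ p ∣ a)
    (f : ℕ) (hf : f = orderOf (a : ZMod p)) (e : ℕ) (he : e = (p - 1) / f)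
    (g : ℕ) (hg : orderOf (g : ZMod p) = p - 1)
    (ζ : ℂ) (hζ : ζ = Complex.exp (2 * Real.pi * Complex.I / p))
    (η : ℕ → ℂ) (hη : ∀ i, η i = ∑ j ∈ Finset.Icc 1 f, ζ ^ (g ^ i * a ^ j)) :
    ∑ i ∈ Finset.Icc 1 e, ‖η i‖ ^ 2 = (p : ℝ) - f := by
  have := Fact.mk hp
  have hζ_pow : ∀ n : ℕ, ζ ^ n = ZMod.stdAddChar (n : ZMod p) := fun n => by
    rw [hζ, ← Complex.exp_nat_mul, ZMod.stdAddChar_apply, ZMod.toCircle_natCast]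
    ring_nf
  have hf_dvd : f ∣ p - 1 :=
    hf ▸ ZMod.orderOf_dvd_card_sub_one (by rwa [Ne, ZMod.natCast_eq_zero_iff])
  have hη_char :
      ∀ i, η i = ∑ j ∈ Icc 1 f, ZMod.stdAddChar ((g : ZMod p) ^ i * (a : ZMod p) ^ j) :=
    fun i => by simp only [hη, hζ_pow, Nat.cast_mul, Nat.cast_pow]
  simp only [hη_char]
  simpa [ZMod.card] using sum_norm_sq_gaussianPeriods (ZMod.isPrimitive_stdAddChar p)
    (by rwa [ZMod.card]) hf.symm (by rw [ZMod.card, he, Nat.div_mul_cancel hf_dvd])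
end

section
/- Let p be prime, a an integer of multiplicative order f modulo p, ζ = e^{2πi/p}, and for m in [1,p-1] let h_m be the representative in [1,p-1] of m·f mod p, and η_{h_m} = Σ_{j=1}^{f} ζ^{h_m a^j}. Then for any k with 1 ≤ k ≤ p−1, |Σ_{m=1}^{k} η_{h_m}| ≤ Σ_{j=1}^{f} |sin(π a^j f k / p) / sin(π a^j f / p)|. -/
/-!
Since ζ has order p, `η (h m) = ∑ⱼ (ζ ^ (f * a ^ j)) ^ m`, so after swapping the sums the
`j`-th term is a geometric sum of the root of unity `ζ ^ (f * a ^ j)`, which is not `1`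
because `0 < f < p` and `p ∤ a`. Its modulus is the ratio of sines, and the triangle
inequality gives the bound.
-/

open Complex Finset

theorem norm_sum_Icc_exp_mul_I_pow {θ : ℝ} (hθ : exp (I * θ) ≠ 1) (k : ℕ) :
    ‖∑ m ∈ Icc 1 k, exp (I * θ) ^ m‖ = |Real.sin (k * θ / 2) / Real.sin (θ / 2)| := by
  have hpow : exp (I * θ) ^ k = exp (I * ↑(k * θ)) := by
    rw [← exp_nat_mul]; push_cast; ring_nf
  have hshift : ∑ m ∈ Icc 1 k, exp (I * θ) ^ m =
      exp (I * θ) * ∑ m ∈ range k, exp (I * θ) ^ m := by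
    rw [mul_sum, ← Ico_add_one_right_eq_Icc, sum_Ico_eq_sum_range]
    simp only [add_comm 1, pow_succ', add_tsub_cancel_right]
  rw [hshift, norm_mul, norm_exp_I_mul_ofReal, one_mul, geom_sum_eq hθ, norm_div, hpow,
    norm_exp_I_mul_ofReal_sub_one, norm_exp_I_mul_ofReal_sub_one, norm_mul, norm_mul,
    mul_div_mul_left _ _ (by norm_num), Real.norm_eq_abs, Real.norm_eq_abs, abs_div]

theorem Nat.Prime.not_dvd_orderOf_mul_pow {p a : ℕ} (hp : p.Prime) (hpa : ¬ p ∣ a) (j : ℕ) :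
    ¬ p ∣ orderOf (a : ZMod p) * a ^ j := by
  have : Fact p.Prime := ⟨hp⟩
  have hdvd : orderOf (a : ZMod p) ∣ p - 1 :=
    ZMod.orderOf_dvd_card_sub_one ((ZMod.natCast_eq_zero_iff a p).not.mpr hpa)
  have hpos : 0 < orderOf (a : ZMod p) := Nat.pos_of_dvd_of_pos hdvd (Nat.sub_pos_of_lt hp.one_lt)
  rw [hp.dvd_mul, not_or]
  exact ⟨fun h ↦ (Nat.le_of_dvd hpos h).not_gt (ZMod.orderOf_lt hp.one_lt _),
    fun h ↦ hpa (hp.dvd_of_dvd_pow h)⟩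

theorem stmt13_general (p : ℕ) (hp : p.Prime) (a : ℕ) (hpa : ¬ p ∣ a)
    (f : ℕ) (hf : f = orderOf (a : ZMod p))
    (ζ : ℂ) (hζ : ζ = Complex.exp (2 * Real.pi * Complex.I / p))
    (h : ℕ → ℕ) (hh : ∀ m, h m = m * f % p)
    (η : ℕ → ℂ) (hη : ∀ t, η t = ∑ j ∈ Finset.Icc 1 f, ζ ^ (t * a ^ j))
    (k : ℕ) :
    ‖∑ m ∈ Finset.Icc 1 k, η (h m)‖ ≤
      ∑ j ∈ Finset.Icc 1 f,
        |Real.sin (Real.pi * a ^ j * f * k / p) / Real.sin (Real.pi * a ^ j * f / p)| := by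
  have hprim : IsPrimitiveRoot ζ p := hζ ▸ isPrimitiveRoot_exp p hp.ne_zero
  have hexp (n : ℕ) : ζ ^ n = exp (I * ↑(2 * Real.pi * n / p)) := by
    rw [hζ, ← exp_nat_mul]; push_cast; ring_nf
  have hswap :
      ∑ m ∈ Icc 1 k, η (h m) = ∑ j ∈ Icc 1 f, ∑ m ∈ Icc 1 k, (ζ ^ (f * a ^ j)) ^ m := by
    simp only [hη, hh]
    rw [sum_comm]
    refine sum_congr rfl fun j _ ↦ sum_congr rfl fun m _ ↦ ?_
    rw [pow_mul, hprim.eq_orderOf, pow_mod_orderOf, ← pow_mul, ← pow_mul]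
    ring_nf
  rw [hswap]
  refine (norm_sum_le _ _).trans (sum_le_sum fun j _ ↦ le_of_eq ?_)
  have hne : ζ ^ (f * a ^ j) ≠ 1 := by
    rw [Ne, hprim.pow_eq_one_iff_dvd, hf]
    exact hp.not_dvd_orderOf_mul_pow hpa j
  rw [hexp] at hne ⊢
  rw [norm_sum_Icc_exp_mul_I_pow hne]
  congr 3 <;> push_cast <;> ring

theorem stmt13 (p : ℕ) (hp : p.Prime) (a : ℕ) (hpa : ¬ p ∣ a)
    (f : ℕ) (hf : f = orderOf (a : ZMod p))
    (ζ : ℂ) (hζ : ζ = Complex.exp (2 * Real.pi * Complex.I / p))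
    (h : ℕ → ℕ) (hh : ∀ m, h m = m * f % p)
    (η : ℕ → ℂ) (hη : ∀ t, η t = ∑ j ∈ Finset.Icc 1 f, ζ ^ (t * a ^ j))
    (k : ℕ) (hk1 : 1 ≤ k) (hk2 : k ≤ p - 1) :
    ‖∑ m ∈ Finset.Icc 1 k, η (h m)‖ ≤
      ∑ j ∈ Finset.Icc 1 f,
        |Real.sin (Real.pi * a ^ j * f * k / p) / Real.sin (Real.pi * a ^ j * f / p)| :=
  stmt13_general p hp a hpa f hf ζ hζ h hh η hη k
end

section
/- Let p be prime, a of multiplicative order f modulo p, e = (p−1)/f, g a primitive root mod p, ζ = e^{2πi/p}, and η_i = Σ_{j=1}^{f} ζ^{g^i a^j}. Then Σ_{g_i=1}^{p−1} ζ^{−g_i} η_{i}, where the sum runs over all elements g_i of (ℤ/pℤ)* with η indexed by the coset of g_i, equals Σ_{i=1}^{e} |η_i|² = p − f. -/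
/-!
With `ψ` the standard additive character of `ℤ/p`, `ζ ^ (-k) ζ ^ (a ^ j k) = ψ ((a ^ j - 1) k)`,
and summing over all `k ∈ ℤ/p` kills every `j` except `j = f`, which contributes `p`; the term
`k = 0` contributes `f`, so the sum over `k ≠ 0` is `p - f`. For the second identity, the period
`η` is constant on cosets of `⟨a⟩`, so `|η_i|² = ∑_j ψ (-g^i a^j) η (g^i a^j)`, and
`(i, j) ↦ g^i a^j` with `1 ≤ i ≤ e`, `1 ≤ j ≤ f` runs exactly once through `(ℤ/p)ˣ`: this turns
`∑ |η_i|²` into the first sum.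
-/

open Finset

lemma Nat.ModEq.eq_of_mem_Icc {n a b : ℕ} (h : a ≡ b [MOD n]) (ha : a ∈ Icc 1 n)
    (hb : b ∈ Icc 1 n) : a = b := by
  rw [mem_Icc] at ha hb
  refine h.eq_of_abs_lt ?_
  rw [abs_sub_lt_iff]
  omega

lemma Function.Periodic.sum_Icc_one_add_one {M : Type*} [AddCommMonoid M] {φ : ℕ → M} {f : ℕ}
    (hφ : Function.Periodic φ f) : ∑ j ∈ Icc 1 f, φ (j + 1) = ∑ j ∈ Icc 1 f, φ j := by
  rcases Nat.eq_zero_or_pos f with rfl | hf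
  · simp
  have hwrap : φ (f + 1) = φ 1 := by rw [add_comm]; exact hφ 1
  rw [← Ico_add_one_right_eq_Icc, sum_Ico_add', sum_Ico_succ_top (by omega), hwrap,
    sum_eq_sum_Ico_succ_bot (by omega : 1 < f + 1), add_comm]

lemma Function.Periodic.sum_Icc_one_add {M : Type*} [AddCommMonoid M] {φ : ℕ → M} {f : ℕ}
    (hφ : Function.Periodic φ f) (k : ℕ) : ∑ j ∈ Icc 1 f, φ (j + k) = ∑ j ∈ Icc 1 f, φ j := by
  induction k with
  | zero => rfl
  | succ k ih =>
    simp_rw [← add_assoc, ← ih, add_right_comm _ k 1]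
    exact (hφ.add_const k).sum_Icc_one_add_one

section CommGroup

variable {G : Type*} [CommGroup G]

lemma pow_eq_one_iff_eq_orderOf {u : G} {j : ℕ} (hj : j ∈ Icc 1 (orderOf u)) :
    u ^ j = 1 ↔ j = orderOf u := by
  refine ⟨fun h => ?_, fun h => h ▸ pow_orderOf_eq_one u⟩
  rw [← pow_orderOf_eq_one u, pow_eq_pow_iff_modEq] at h
  exact h.eq_of_mem_Icc hj (by rw [mem_Icc] at hj ⊢; omega)

lemma injOn_pow_mul_pow_s15 {v u : G} {e f : ℕ} (hv : orderOf v = e * f) (hu : orderOf u = f) :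
    Set.InjOn (fun x : ℕ × ℕ => v ^ x.1 * u ^ x.2) (Icc 1 e ×ˢ Icc 1 f : Finset (ℕ × ℕ)) := by
  rintro ⟨i, j⟩ hij ⟨i', j'⟩ hij' h
  simp only [coe_product, Set.mem_prod, mem_coe] at hij hij' h
  have hf : f ≠ 0 := by rintro rfl; simp at hij
  have hii : i = i' := by
    have hu1 : u ^ f = 1 := hu ▸ pow_orderOf_eq_one u
    have hpow : v ^ (i * f) = v ^ (i' * f) := by
      simpa only [mul_pow, pow_right_comm u, hu1, one_pow, mul_one, pow_mul] using
        congrArg (· ^ f) h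
    rw [pow_eq_pow_iff_modEq, hv] at hpow
    exact (Nat.ModEq.mul_right_cancel' hf hpow).eq_of_mem_Icc hij.1 hij'.1
  subst hii
  have hjj : u ^ j = u ^ j' := mul_left_cancel h
  rw [pow_eq_pow_iff_modEq, hu] at hjj
  rw [hjj.eq_of_mem_Icc hij.2 hij'.2]

lemma sum_pow_mul_pow_eq_sum_univ [Fintype G] {M : Type*} [AddCommMonoid M] {v u : G} {e f : ℕ}
    (hv : orderOf v = e * f) (hu : orderOf u = f) (hcard : e * f = Fintype.card G)
    (φ : G → M) : ∑ x ∈ Icc 1 e ×ˢ Icc 1 f, φ (v ^ x.1 * u ^ x.2) = ∑ w, φ w := by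
  classical
  have hinj := injOn_pow_mul_pow_s15 hv hu
  rw [← sum_image hinj]
  congr 1
  apply eq_univ_of_card
  rw [card_image_of_injOn hinj, card_product, Nat.card_Icc, Nat.card_Icc, ← hcard]
  simp

end CommGroup

lemma Finset.sum_units_eq_sum_erase_zero {G₀ M : Type*} [GroupWithZero G₀] [Fintype G₀]
    [DecidableEq G₀] [AddCommMonoid M] (φ : G₀ → M) :
    ∑ w : G₀ˣ, φ w = ∑ x ∈ univ.erase 0, φ x := by
  rw [Fintype.sum_equiv unitsEquivNeZero (fun w => φ w) (fun x : {x : G₀ // x ≠ 0} => φ x)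
    fun _ => rfl]
  exact (sum_subtype _ (by simp) φ).symm

section GaussianPeriod

variable {F R : Type*} [Field F] [CommRing R]

/-- The period of the coset `⟨u⟩ x`; the `η_i` of the statement is `gaussianPeriod ψ u (g ^ i)`. -/
noncomputable def gaussianPeriod (ψ : AddChar F R) (u : Fˣ) (x : F) : R :=
  ∑ j ∈ Icc 1 (orderOf u), ψ ((u ^ j : Fˣ) * x)

lemma gaussianPeriod_pow_mul (ψ : AddChar F R) (u : Fˣ) (k : ℕ) (x : F) :
    gaussianPeriod ψ u ((u ^ k : Fˣ) * x) = gaussianPeriod ψ u x := by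
  have hper : Function.Periodic (fun j => ψ ((u ^ j : Fˣ) * x)) (orderOf u) := fun j => by
    simp only [pow_add, pow_orderOf_eq_one, mul_one]
  simpa only [gaussianPeriod, ← mul_assoc, ← Units.val_mul, ← pow_add] using
    hper.sum_Icc_one_add k

lemma gaussianPeriod_zero (ψ : AddChar F R) (u : Fˣ) : gaussianPeriod ψ u 0 = orderOf u := by
  simp [gaussianPeriod]

lemma sq_norm_gaussianPeriod [Finite F] (ψ : AddChar F ℂ) (u w : Fˣ) :
    (‖gaussianPeriod ψ u w‖ ^ 2 : ℂ) =
      ∑ j ∈ Icc 1 (orderOf u), ψ (-(w * u ^ j : Fˣ)) * gaussianPeriod ψ u (w * u ^ j : Fˣ) := by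
  have hconj : (starRingEnd ℂ) (gaussianPeriod ψ u w) =
      ∑ j ∈ Icc 1 (orderOf u), ψ (-(w * u ^ j : Fˣ)) := by
    simp only [gaussianPeriod, map_sum, ← AddChar.map_neg_eq_conj, Units.val_mul, mul_comm]
  rw [← Complex.mul_conj', hconj, mul_sum]
  refine sum_congr rfl fun j _ => ?_
  rw [mul_comm, Units.val_mul, mul_comm (w : F), gaussianPeriod_pow_mul]

variable [Fintype F] [DecidableEq F] [IsDomain R]

lemma sum_addChar_neg_mul_gaussianPeriod {ψ : AddChar F R} (hψ : ψ.IsPrimitive) (u : Fˣ) :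
    ∑ x, ψ (-x) * gaussianPeriod ψ u x = Fintype.card F := by
  have hinner (j : ℕ) : ∑ x, ψ (-x) * ψ ((u ^ j : Fˣ) * x) =
      if u ^ j = 1 then (Fintype.card F : R) else 0 := by
    calc ∑ x, ψ (-x) * ψ ((u ^ j : Fˣ) * x) = ∑ x, ψ (x * ((u ^ j : Fˣ) - 1)) :=
          sum_congr rfl fun x _ => by rw [← AddChar.map_add_eq_mul]; ring_nf
      _ = _ := by
        simp only [AddChar.sum_mulShift _ hψ, sub_eq_zero, Units.val_eq_one, Nat.cast_ite,
          Nat.cast_zero]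
  have hf : orderOf u ∈ Icc 1 (orderOf u) := right_mem_Icc.2 (orderOf_pos u)
  simp_rw [gaussianPeriod, mul_sum]
  rw [sum_comm, sum_congr rfl fun j _ => hinner j,
    sum_congr rfl fun j hj => if_congr (pow_eq_one_iff_eq_orderOf hj) rfl rfl, sum_ite_eq' _ _,
    if_pos hf]

lemma sum_units_addChar_neg_mul_gaussianPeriod {ψ : AddChar F R} (hψ : ψ.IsPrimitive) (u : Fˣ) :
    ∑ w : Fˣ, ψ (-w) * gaussianPeriod ψ u w = Fintype.card F - orderOf u := by
  have h := sum_addChar_neg_mul_gaussianPeriod hψ u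
  rw [← add_sum_erase _ _ (mem_univ 0), ← sum_units_eq_sum_erase_zero, gaussianPeriod_zero,
    neg_zero, AddChar.map_zero_eq_one, one_mul] at h
  linear_combination h

lemma sum_sq_norm_gaussianPeriod {ψ : AddChar F ℂ} (hψ : ψ.IsPrimitive) {u v : Fˣ} {e : ℕ}
    (hv : orderOf v = e * orderOf u) (hcard : e * orderOf u = Fintype.card F - 1) :
    ∑ i ∈ Icc 1 e, ‖gaussianPeriod ψ u (v ^ i : Fˣ)‖ ^ 2 = (Fintype.card F : ℝ) - orderOf u := by
  rw [← Fintype.card_units] at hcard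
  have h : ∑ i ∈ Icc 1 e, (‖gaussianPeriod ψ u (v ^ i : Fˣ)‖ ^ 2 : ℂ) =
      (Fintype.card F : ℂ) - orderOf u := by
    simp_rw [sq_norm_gaussianPeriod, ← sum_product']
    rw [sum_pow_mul_pow_eq_sum_univ hv rfl hcard (fun w : Fˣ => ψ (-w) * gaussianPeriod ψ u w),
      sum_units_addChar_neg_mul_gaussianPeriod hψ]
  exact_mod_cast h

end GaussianPeriod

lemma Complex.exp_two_pi_I_div_pow (N : ℕ) [NeZero N] (n : ℕ) :
    Complex.exp (2 * Real.pi * Complex.I / N) ^ n = ZMod.stdAddChar (n : ZMod N) := by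
  have h := ZMod.stdAddChar_coe (N := N) n
  push_cast at h
  rw [h, ← Complex.exp_nat_mul]
  ring_nf

lemma ZMod.sum_Icc_one_natCast_eq_sum_erase_zero {M : Type*} [AddCommMonoid M] (p : ℕ)
    [NeZero p] (φ : ZMod p → M) : ∑ k ∈ Icc 1 (p - 1), φ k = ∑ x ∈ univ.erase 0, φ x := by
  refine sum_nbij' (fun k => (k : ZMod p)) ZMod.val (fun k hk => ?_) (fun x hx => ?_)
    (fun k hk => ZMod.val_cast_of_lt ?_) (fun x _ => ZMod.natCast_zmod_val x) (fun _ _ => rfl)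
  · rw [mem_Icc] at hk
    rw [mem_erase, Ne, ZMod.natCast_eq_zero_iff]
    exact ⟨fun h => by have := Nat.le_of_dvd (by omega) h; omega, mem_univ _⟩
  · have hval : x.val ≠ 0 := (ZMod.val_ne_zero x).2 (ne_of_mem_erase hx)
    have := x.val_lt
    rw [mem_Icc]
    omega
  · rw [mem_Icc] at hk
    have := NeZero.pos p
    omega

theorem stmt15 (p : ℕ) (hp : p.Prime) (a : ℕ) (hpa : ¬ p ∣ a)
    (f : ℕ) (hf : f = orderOf (a : ZMod p)) (e : ℕ) (he : e = (p - 1) / f)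
    (g : ℕ) (hg : orderOf (g : ZMod p) = p - 1)
    (ζ : ℂ) (hζ : ζ = Complex.exp (2 * Real.pi * Complex.I / p))
    (η : ℕ → ℂ) (hη : ∀ i, η i = ∑ j ∈ Finset.Icc 1 f, ζ ^ (g ^ i * a ^ j)) :
    (∑ k ∈ Finset.Icc 1 (p - 1), ζ ^ (-(k : ℤ)) * ∑ j ∈ Finset.Icc 1 f, ζ ^ (a ^ j * k))
        = (p : ℂ) - f ∧
    ∑ i ∈ Finset.Icc 1 e, ‖η i‖ ^ 2 = (p : ℝ) - f := by
  have : Fact p.Prime := ⟨hp⟩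
  set ψ : AddChar (ZMod p) ℂ := ZMod.stdAddChar
  have hζψ (n : ℕ) : ζ ^ n = ψ n := hζ ▸ Complex.exp_two_pi_I_div_pow p n
  obtain ⟨u, hu⟩ : IsUnit (a : ZMod p) :=
    isUnit_iff_ne_zero.2 (by rwa [Ne, ZMod.natCast_eq_zero_iff])
  obtain ⟨v, hv⟩ : IsUnit (g : ZMod p) :=
    (orderOf_pos_iff.1 (by have := hp.two_le; omega)).isUnit
  have hfu : orderOf u = f := by rw [hf, ← hu, orderOf_units]
  have hvu : orderOf v = p - 1 := by rw [← hg, ← hv, orderOf_units]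
  have hef : e * f = p - 1 := by
    rw [he, Nat.div_mul_cancel (by rw [← hfu, ← ZMod.card_units p]; exact orderOf_dvd_card)]
  have hperiod (x : ℕ) : ∑ j ∈ Icc 1 f, ζ ^ (a ^ j * x) = gaussianPeriod ψ u x := by
    simp only [gaussianPeriod, hfu, hζψ, Nat.cast_mul, Nat.cast_pow, hu, Units.val_pow_eq_pow_val]
  constructor
  · have hneg (k : ℕ) : ζ ^ (-(k : ℤ)) = ψ (-k) := by
      rw [zpow_neg, zpow_natCast, hζψ, AddChar.map_neg_eq_inv]
    simp only [hneg, hperiod]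
    rw [ZMod.sum_Icc_one_natCast_eq_sum_erase_zero p (fun x => ψ (-x) * gaussianPeriod ψ u x),
      ← sum_units_eq_sum_erase_zero, sum_units_addChar_neg_mul_gaussianPeriod
        (ZMod.isPrimitive_stdAddChar p), ZMod.card, hfu]
  · have hη' (i : ℕ) : η i = gaussianPeriod ψ u (v ^ i : (ZMod p)ˣ) := by
      simp only [hη, mul_comm (g ^ i), hperiod, Nat.cast_pow, hv, Units.val_pow_eq_pow_val]
    simp only [hη']
    rw [sum_sq_norm_gaussianPeriod (ZMod.isPrimitive_stdAddChar p) (by rw [hvu, hfu, hef])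
      (by rw [hfu, hef, ZMod.card]), ZMod.card, hfu]
end

section
/- Let x ≥ 2 be a real number, a > 1 an integer, and for each prime p ≤ x coprime to a let f_a(p) be the multiplicative order of a modulo p. Then Σ_{p ≤ x} 1/f_a(p) ≤ Σ_{j < x} ω_x(a^j − 1)/j + Σ_{p ≤ x, f_a(p) ≥ x} 1/f_a(p), where ω_x(m) counts the distinct primes p ≤ x dividing m; in particular Σ_{p ≤ x, f_a(p) < x} 1/f_a(p) ≤ Σ_{j < x} ω_x(a^j − 1)/j. -/
/-! Group the primes by their order `j`: a prime of order `j` divides `a ^ j - 1`, so at most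
`ω_x(a ^ j - 1)` primes `p ≤ x` have order `j`, and each contributes `1 / j`. -/

open Finset

theorem orderOf_intCast_zmod_pos {p : ℕ} [Fact p.Prime] {a : ℤ} (ha : ¬ (p : ℤ) ∣ a) :
    0 < orderOf (a : ZMod p) := by
  have hne : (a : ZMod p) ≠ 0 := mt (ZMod.intCast_zmod_eq_zero_iff_dvd a p).mp ha
  refine orderOf_pos_iff.mpr <|
    isOfFinOrder_iff_pow_eq_one.mpr ⟨p - 1, ?_, ZMod.pow_card_sub_one_eq_one hne⟩
  have := (Fact.out : p.Prime).two_le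
  omega

theorem natCast_dvd_pow_orderOf_intCast_sub_one (a : ℤ) (n : ℕ) :
    (n : ℤ) ∣ a ^ orderOf (a : ZMod n) - 1 := by
  rw [← ZMod.intCast_zmod_eq_zero_iff_dvd]
  push_cast
  rw [pow_orderOf_eq_one, sub_self]

theorem sum_one_div_le_sum_div_of_card_fiber_le {ι : Type*} (s : Finset ι) (t : Finset ℕ)
    (f : ι → ℕ) (c : ℕ → ℕ) (hf : ∀ i ∈ s, f i ∈ t)
    (hc : ∀ j ∈ t, #{i ∈ s | f i = j} ≤ c j) :
    ∑ i ∈ s, (1 : ℝ) / f i ≤ ∑ j ∈ t, (c j : ℝ) / j := by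
  rw [← sum_fiberwise_of_maps_to hf]
  refine sum_le_sum fun j hj => ?_
  calc ∑ i ∈ s with f i = j, (1 : ℝ) / f i
      = ∑ i ∈ s with f i = j, (1 : ℝ) / j :=
        sum_congr rfl fun i hi => by rw [(mem_filter.mp hi).2]
    _ = (#{i ∈ s | f i = j} : ℝ) / j := by rw [sum_const, nsmul_eq_mul, mul_one_div]
    _ ≤ (c j : ℝ) / j := by gcongr; exact hc j hj

theorem stmt19_general (a : ℤ) (x : ℝ)
    (ω : ℤ → ℕ)
    (hω : ∀ m, ω m = ((Finset.range (⌊x⌋₊ + 1)).filter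
      (fun p : ℕ => p.Prime ∧ (p : ℤ) ∣ m)).card)
    (P : Finset ℕ)
    (hP : P = (Finset.range (⌊x⌋₊ + 1)).filter
      (fun p : ℕ => p.Prime ∧ ¬ (p : ℤ) ∣ a)) :
    (∑ p ∈ P, (1 : ℝ) / (orderOf (a : ZMod p)) ≤
      (∑ j ∈ (Finset.Icc 1 ⌈x⌉₊).filter (fun j : ℕ => (j : ℝ) < x),
        (ω (a ^ j - 1) : ℝ) / j) +
      ∑ p ∈ P.filter (fun p => x ≤ (orderOf (a : ZMod p) : ℝ)),
        (1 : ℝ) / (orderOf (a : ZMod p))) ∧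
    ∑ p ∈ P.filter (fun p => (orderOf (a : ZMod p) : ℝ) < x),
        (1 : ℝ) / (orderOf (a : ZMod p)) ≤
      ∑ j ∈ (Finset.Icc 1 ⌈x⌉₊).filter (fun j : ℕ => (j : ℝ) < x),
        (ω (a ^ j - 1) : ℝ) / j := by
  have small : ∑ p ∈ P.filter (fun p => (orderOf (a : ZMod p) : ℝ) < x),
      (1 : ℝ) / (orderOf (a : ZMod p)) ≤
      ∑ j ∈ (Icc 1 ⌈x⌉₊).filter (fun j : ℕ => (j : ℝ) < x),
        (ω (a ^ j - 1) : ℝ) / j := by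
    refine sum_one_div_le_sum_div_of_card_fiber_le _ _ _ _ (fun p hp => ?_) (fun j _ => ?_)
    · obtain ⟨hpP, hlt⟩ := mem_filter.mp hp
      obtain ⟨-, hp, hpa⟩ := mem_filter.mp (hP ▸ hpP)
      have : Fact p.Prime := ⟨hp⟩
      refine mem_filter.mpr ⟨mem_Icc.mpr ⟨orderOf_intCast_zmod_pos hpa, ?_⟩, hlt⟩
      exact_mod_cast hlt.le.trans (Nat.le_ceil x)
    · rw [hω]
      refine card_le_card fun p hp => ?_
      obtain ⟨hpP, rfl⟩ := mem_filter.mp hp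
      obtain ⟨hpx, hp, -⟩ := mem_filter.mp (hP ▸ (mem_filter.mp hpP).1)
      exact mem_filter.mpr ⟨hpx, hp, natCast_dvd_pow_orderOf_intCast_sub_one a p⟩
  refine ⟨?_, small⟩
  rw [← sum_filter_add_sum_filter_not P (fun p => (orderOf (a : ZMod p) : ℝ) < x)]
  simp only [not_lt]
  exact add_le_add small le_rfl

theorem stmt19 (a : ℤ) (ha : 1 < a) (x : ℝ) (hx : 2 ≤ x)
    (ω : ℤ → ℕ)
    (hω : ∀ m, ω m = ((Finset.range (⌊x⌋₊ + 1)).filter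
      (fun p : ℕ => p.Prime ∧ (p : ℤ) ∣ m)).card)
    (P : Finset ℕ)
    (hP : P = (Finset.range (⌊x⌋₊ + 1)).filter
      (fun p : ℕ => p.Prime ∧ ¬ (p : ℤ) ∣ a)) :
    (∑ p ∈ P, (1 : ℝ) / (orderOf (a : ZMod p)) ≤
      (∑ j ∈ (Finset.Icc 1 ⌈x⌉₊).filter (fun j : ℕ => (j : ℝ) < x),
        (ω (a ^ j - 1) : ℝ) / j) +
      ∑ p ∈ P.filter (fun p => x ≤ (orderOf (a : ZMod p) : ℝ)),
        (1 : ℝ) / (orderOf (a : ZMod p))) ∧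
    ∑ p ∈ P.filter (fun p => (orderOf (a : ZMod p) : ℝ) < x),
        (1 : ℝ) / (orderOf (a : ZMod p)) ≤
      ∑ j ∈ (Finset.Icc 1 ⌈x⌉₊).filter (fun j : ℕ => (j : ℝ) < x),
        (ω (a ^ j - 1) : ℝ) / j :=
  stmt19_general a x ω hω P hP
end
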